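/- For every positive integer m, the interval [m, 2^m·m - 1] is an S₂-full set, and 2^m·m ≤ 2^{2m} = τ(1, 2m). -/

import Mathlib

open Finset

/-- `F < G` for finite sets: every element of `F` is below every element of `G`. -/
def FinsetLT (F G : Finset ℕ) : Prop := ∀ x ∈ F, ∀ y ∈ G, x < y

/-- Membership in the Schreier family `S₁`: a finite set of positive integers
with `|F| ≤ min F` (the empty set belongs trivially). -/
def IsSchreier (F : Finset ℕ) : Prop := ∀ n ∈ F, 0 < n ∧ F.card ≤ n

/-- `F` is a union of at most `d` sets `F₁ < F₂ < ⋯`, each in the family `P`. -/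
def Combine (P : Finset ℕ → Prop) (d : ℕ) (F : Finset ℕ) : Prop :=
  ∃ L : List (Finset ℕ), L.length ≤ d ∧ L.Pairwise FinsetLT ∧
    (∀ G ∈ L, P G) ∧ L.foldr (· ∪ ·) ∅ = F

/-- Membership in `S₂`. -/
def MemS2 (F : Finset ℕ) : Prop :=
  F = ∅ ∨ ∃ h : F.Nonempty, Combine IsSchreier (F.min' h) F

/-- Membership in `S₃`. -/
def MemS3 (F : Finset ℕ) : Prop :=
  F = ∅ ∨ ∃ h : F.Nonempty, Combine MemS2 (F.min' h) F

/-- `F` is a maximal member of the family `P` (among sets of positive integers). -/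
def IsFull (P : Finset ℕ → Prop) (F : Finset ℕ) : Prop :=
  P F ∧ ∀ n : ℕ, 0 < n → n ∉ F → ¬ P (insert n F)

/-- `F ∈ full_{a,b}(P)`. -/
def FullAB (P : Finset ℕ → Prop) (a b : ℕ) (F : Finset ℕ) : Prop :=
  P F ∧ F ⊆ Finset.Icc a b ∧ a ∈ F ∧
    ∀ n ∈ Finset.Icc a b, n ∉ F → ¬ P (insert n F)

/-- The tower function `τ`. -/
def tau : ℕ → ℕ → ℕ
  | 0, a => a
  | i + 1, a => 2 ^ tau i a

/-- `E₁(F)`: `F` itself if `|F| ≤ min F`, otherwise the `min F` smallest elements of `F`. -/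
def E1 (F : Finset ℕ) : Finset ℕ :=
  if h : F.Nonempty then ((F.sort (· ≤ ·)).take (F.min' h)).toFinset else ∅

/-- Union of the first `i` greedy pieces. -/
def Eacc : ℕ → Finset ℕ → Finset ℕ
  | 0, _ => ∅
  | i + 1, F => Eacc i F ∪ E1 (F \ Eacc i F)

/-- The `i`-th greedy piece `E_i(F)` (for `i ≥ 1`). -/
def Epiece (i : ℕ) (F : Finset ℕ) : Finset ℕ := E1 (F \ Eacc (i - 1) F)

open Classical in
/-- `E₁*(F)`: `F` itself if `F ∈ S₂`, otherwise `E₁(F) ∪ ⋯ ∪ E_{min F}(F)`. -/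
noncomputable def E1star (F : Finset ℕ) : Finset ℕ :=
  if MemS2 F then F
  else if h : F.Nonempty then Eacc (F.min' h) F else ∅

/-- Union of the first `i` starred greedy pieces. -/
noncomputable def EaccStar : ℕ → Finset ℕ → Finset ℕ
  | 0, _ => ∅
  | i + 1, F => EaccStar i F ∪ E1star (F \ EaccStar i F)

/-- The `i`-th starred greedy piece `E_i*(F)` (for `i ≥ 1`). -/
noncomputable def EpieceStar (i : ℕ) (F : Finset ℕ) : Finset ℕ :=
  E1star (F \ EaccStar (i - 1) F)

/-!
The interval `[m, 2^m m)` splits into the `m` Schreier blocks `[2^i m, 2^(i+1) m)`, so it lies in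
`S₂`. Conversely, if Schreier sets `F₁ < ⋯ < F_d` cover `[s, N)` and some point `≥ N`, then `F₁`
cannot reach beyond `2s` without leaving a gap in `[s, 2s)`, so by induction `N < 2^d s`.
Inserting `n ≥ 2^m m` keeps the minimum `m`, hence at most `m` pieces, which would give
`2^m m < 2^m m`; inserting `n < m` allows only `m - 1` pieces, which would give
`2^m m - 1 < 2^(m-1) m`.
-/

lemma mem_foldr_union {x : ℕ} {L : List (Finset ℕ)} :
    x ∈ L.foldr (· ∪ ·) ∅ ↔ ∃ G ∈ L, x ∈ G := by
  induction L with
  | nil => simp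
  | cons F L ih => simp [ih]

lemma isSchreier_Ico_two_mul {a : ℕ} (ha : 0 < a) : IsSchreier (Ico a (2 * a)) := by
  intro n hn
  rw [mem_Ico] at hn
  rw [Nat.card_Ico]
  omega

lemma combine_isSchreier_Ico (k : ℕ) {a : ℕ} (ha : 0 < a) :
    Combine IsSchreier k (Ico a (2 ^ k * a)) := by
  induction k generalizing a with
  | zero => exact ⟨[], by simp⟩
  | succ k ih =>
    obtain ⟨L, hlen, hpair, hS, hunion⟩ := ih (by omega : 0 < 2 * a)
    have hLabove : ∀ G ∈ L, ∀ y ∈ G, 2 * a ≤ y := fun G hG y hy => by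
      have : y ∈ Ico (2 * a) (2 ^ k * (2 * a)) := hunion ▸ mem_foldr_union.2 ⟨G, hG, hy⟩
      exact (mem_Ico.1 this).1
    refine ⟨Ico a (2 * a) :: L, by simpa using hlen, ?_, ?_, ?_⟩
    · refine List.pairwise_cons.2 ⟨fun G hG x hx y hy => ?_, hpair⟩
      exact (mem_Ico.1 hx).2.trans_le (hLabove G hG y hy)
    · simpa [isSchreier_Ico_two_mul ha] using hS
    · have h2a : 2 * a ≤ 2 ^ k * (2 * a) := Nat.le_mul_of_pos_left _ (by positivity)
      rw [List.foldr_cons, hunion, Ico_union_Ico_eq_Ico (by omega) h2a, pow_succ, mul_assoc,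
        mul_comm 2 a]

/-- An element `x ≥ 2s` of `F` would force all of `[s, 2s)` into `F`, so `|F| > s ≥ |F|`. -/
lemma IsSchreier.lt_two_mul {F V : Finset ℕ} (hF : IsSchreier F) (hFV : FinsetLT F V)
    {s N : ℕ} (hs : 0 < s) (hsN : 2 * s ≤ N) (hcov : Ico s N ⊆ F ∪ V) :
    ∀ x ∈ F, x < 2 * s := by
  intro x hx
  by_contra! hxs
  have hIco : Ico s (2 * s) ⊆ F := fun y hy => by
    rw [mem_Ico] at hy
    rcases mem_union.1 (hcov (mem_Ico.2 ⟨hy.1, by omega⟩)) with hyF | hyV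
    · exact hyF
    · exact absurd (hFV x hx y hyV) (by omega)
  have hsF : s ∈ F := hIco (mem_Ico.2 ⟨le_rfl, by omega⟩)
  have hcard : #(insert x (Ico s (2 * s))) ≤ #F :=
    card_le_card (insert_subset hx hIco)
  rw [card_insert_of_notMem (by rw [mem_Ico]; omega), Nat.card_Ico] at hcard
  have := (hF s hsF).2
  omega

lemma lt_two_pow_length_mul {L : List (Finset ℕ)} (hpair : L.Pairwise FinsetLT)
    (hS : ∀ G ∈ L, IsSchreier G) {s N n : ℕ} (hs : 0 < s)
    (hcov : Ico s N ⊆ L.foldr (· ∪ ·) ∅) (hn : n ∈ L.foldr (· ∪ ·) ∅) (hNn : N ≤ n) :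
    N < 2 ^ L.length * s := by
  induction L generalizing s with
  | nil => simp at hn
  | cons F L ih =>
    rw [List.length_cons, pow_succ, mul_assoc]
    by_cases hsN : N < 2 * s
    · exact hsN.trans_le (Nat.le_mul_of_pos_left _ (by positivity))
    obtain ⟨hFL, hpairL⟩ := List.pairwise_cons.1 hpair
    have hFV : FinsetLT F (L.foldr (· ∪ ·) ∅) := fun x hx y hy => by
      obtain ⟨G, hG, hyG⟩ := mem_foldr_union.1 hy
      exact hFL G hG x hx y hyG
    have hFlt := (hS F List.mem_cons_self).lt_two_mul hFV hs (by omega) hcov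
    have hmem_tail : ∀ y ∈ (F :: L).foldr (· ∪ ·) ∅, 2 * s ≤ y → y ∈ L.foldr (· ∪ ·) ∅ :=
      fun y hy h2y => (mem_union.1 hy).resolve_left fun hyF => (hFlt y hyF).not_ge h2y
    refine ih hpairL (fun G hG => hS G (List.mem_cons_of_mem F hG)) (by omega)
      (fun y hy => ?_) (hmem_tail n hn (by omega))
    rw [mem_Ico] at hy
    exact hmem_tail y (hcov (mem_Ico.2 ⟨by omega, hy.2⟩)) hy.1

lemma Combine.lt_two_pow_mul {d : ℕ} {F : Finset ℕ} (h : Combine IsSchreier d F) {s N n : ℕ}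
    (hs : 0 < s) (hcov : Ico s N ⊆ F) (hn : n ∈ F) (hNn : N ≤ n) : N < 2 ^ d * s := by
  obtain ⟨L, hlen, hpair, hS, rfl⟩ := h
  calc N < 2 ^ L.length * s := lt_two_pow_length_mul hpair hS hs hcov hn hNn
    _ ≤ 2 ^ d * s := Nat.mul_le_mul_right s (Nat.pow_le_pow_right two_pos hlen)

lemma lt_two_pow_mul_self {m : ℕ} (hm : 0 < m) : m < 2 ^ m * m :=
  lt_mul_left hm (Nat.one_lt_two_pow hm.ne')

lemma min'_Ico_two_pow_mul {m : ℕ} (hm : 0 < m) :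
    (Ico m (2 ^ m * m)).min' (nonempty_Ico.2 (lt_two_pow_mul_self hm)) = m :=
  (min'_eq_iff _ _ _).2 ⟨left_mem_Ico.2 (lt_two_pow_mul_self hm), fun _ hb => (mem_Ico.1 hb).1⟩

lemma memS2_Ico {m : ℕ} (hm : 0 < m) : MemS2 (Ico m (2 ^ m * m)) :=
  Or.inr ⟨_, by rw [min'_Ico_two_pow_mul hm]; exact combine_isSchreier_Ico m hm⟩

lemma not_memS2_insert_Ico {m n : ℕ} (hm : 0 < m) (hn : n ∉ Ico m (2 ^ m * m)) :
    ¬ MemS2 (insert n (Ico m (2 ^ m * m))) := by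
  set M := 2 ^ m * m
  have hmM : m < M := lt_two_pow_mul_self hm
  rintro (hempty | ⟨_, hC⟩)
  · exact insert_ne_empty _ _ hempty
  rw [min'_insert _ _ (nonempty_Ico.2 hmM), min'_Ico_two_pow_mul hm] at hC
  rw [mem_Ico, not_and_or, not_le, not_lt] at hn
  rcases hn with hnm | hMn
  · have hcov : Ico m (M - 1) ⊆ insert n (Ico m M) :=
      (Ico_subset_Ico_right (Nat.sub_le M 1)).trans (subset_insert _ _)
    have hlast : M - 1 ∈ insert n (Ico m M) :=
      mem_insert_of_mem (mem_Ico.2 ⟨by omega, by omega⟩)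
    have hlt := hC.lt_two_pow_mul hm hcov hlast le_rfl
    have hpow : 2 ^ min n m * m ≤ 2 ^ (m - 1) * m :=
      Nat.mul_le_mul_right m (Nat.pow_le_pow_right two_pos (show min n m ≤ m - 1 by omega))
    have : M = 2 * (2 ^ (m - 1) * m) := by
      rw [← mul_assoc, ← pow_succ', Nat.sub_add_cancel hm]
    omega
  · have hlt := hC.lt_two_pow_mul hm (subset_insert _ _) (mem_insert_self _ _) hMn
    have hpow : 2 ^ min n m * m ≤ M :=
      Nat.mul_le_mul_right m (Nat.pow_le_pow_right two_pos (min_le_right n m))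
    omega

theorem stmt5 (m : ℕ) (hm : 0 < m) :
    IsFull MemS2 (Finset.Icc m (2 ^ m * m - 1)) ∧
    2 ^ m * m ≤ 2 ^ (2 * m) ∧ 2 ^ (2 * m) = tau 1 (2 * m) := by
  have hM : ¬ IsMin (2 ^ m * m) := not_isMin_of_lt (lt_two_pow_mul_self hm)
  rw [Icc_sub_one_right_eq_Ico_of_not_isMin hM]
  refine ⟨⟨memS2_Ico hm, fun n _ hn => not_memS2_insert_Ico hm hn⟩, ?_, rfl⟩
  calc 2 ^ m * m ≤ 2 ^ m * 2 ^ m := Nat.mul_le_mul_left _ Nat.lt_two_pow_self.le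
    _ = 2 ^ (2 * m) := by rw [← pow_add, two_mul]
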